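/- arXiv:2601.03501 — 2 statements merged into one kernel-verified Lean document; each statement's English description precedes it below -/
import Mathlib

section
/- If X ⊆ A^G is a subshift of finite type, then the set S(X) = {Y ∈ S(A^G) : Y ⊆ X} of subshifts contained in X is an open subset of the metric space (S(A^G), D). -/
open scoped Topology

/-- The shift action of `G` on configurations `G → A`: `(g • x) h = x (g⁻¹ h)`. -/
def shiftMap {G A : Type} [Group G] (g : G) (x : G → A) : G → A := fun h => x (g⁻¹ * h)

/-- A set of configurations is shift-invariant. -/
def ShiftInvariant {G A : Type} [Group G] (X : Set (G → A)) : Prop :=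
  ∀ g : G, ∀ x ∈ X, shiftMap g x ∈ X

/-- The prodiscrete topology on `G → A` (`A` discrete). -/
def cfgTop (G A : Type) : TopologicalSpace (G → A) :=
  @Pi.topologicalSpace G (fun _ => A) (fun _ => ⊥)

/-- A subshift: a nonempty, closed, shift-invariant set of configurations. -/
def IsSubshift {G A : Type} [Group G] (X : Set (G → A)) : Prop :=
  X.Nonempty ∧ IsClosed[cfgTop G A] X ∧ ShiftInvariant X

/-- A pattern: a function from a finite subset of `G` to `A`. -/
abbrev Pattern (G A : Type) := Σ F : Finset G, ((↑F : Set G) → A)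

/-- A pattern appears in a configuration if some translate of the configuration
restricts to the pattern on its support. -/
def Appears {G A : Type} [Group G] (p : Pattern G A) (x : G → A) : Prop :=
  ∃ g : G, ∀ h : (p.1 : Set G), shiftMap g x ↑h = p.2 h

/-- A subshift of finite type: a subshift defined by a finite set of forbidden patterns. -/
def IsSFT {G A : Type} [Group G] (X : Set (G → A)) : Prop :=
  IsSubshift X ∧ ∃ F : Set (Pattern G A), F.Finite ∧
    X = {x | ∀ p ∈ F, ¬ Appears p x}

/-- The ball `B_n`: elements of `G` represented by words of length at most `n` over `S`. -/
def ball {G : Type} [Group G] (S : Finset G) (n : ℕ) : Set G :=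
  {g | ∃ w : List G, (∀ s ∈ w, s ∈ S) ∧ w.length ≤ n ∧ w.prod = g}

/-- The language of `X` with support `F`: restrictions to `F` of elements of `X`. -/
def Lang {G A : Type} (F : Set G) (X : Set (G → A)) : Set (F → A) :=
  (fun x => fun h : F => x ↑h) '' X

/-- The metric `D` on the space of subshifts:
`D(X,Y) = inf {2^{-n} : L_{B_n}(X) = L_{B_n}(Y)}` (capped at `2`). -/
noncomputable def Dmet {G A : Type} [Group G] (S : Finset G) (X Y : Set (G → A)) : ℝ :=
  sInf (insert 2 {r | ∃ n : ℕ, Lang (ball S n) X = Lang (ball S n) Y ∧ r = (2:ℝ)⁻¹ ^ n})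

/-- A morphism of subshifts: a continuous shift-equivariant map. -/
def IsMorphism {G A B : Type} [Group G] (φ : (G → B) → (G → A)) : Prop :=
  Continuous[cfgTop G B, cfgTop G A] φ ∧
    ∀ (g : G) (x : G → B), φ (shiftMap g x) = shiftMap g (φ x)

/-- A sofic subshift: the image of an SFT under a morphism. -/
def IsSofic {G A : Type} [Group G] (X : Set (G → A)) : Prop :=
  ∃ (B : Type) (_ : Fintype B) (Y : Set (G → B)) (φ : (G → B) → (G → A)),
    IsSFT Y ∧ IsMorphism φ ∧ φ '' Y = X

/-- A projectively isolated subshift: there are a finite alphabet `B`, a nonempty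
`D`-open set `U` of subshifts of `B^G`, and a morphism `φ : B^G → A^G`
with `φ(Y) = X` for every `Y ∈ U`. -/
def ProjIsolated {G A : Type} [Group G] (S : Finset G) (X : Set (G → A)) : Prop :=
  IsSubshift X ∧ ∃ (B : Type) (_ : Fintype B) (U : Set (Set (G → B)))
      (φ : (G → B) → (G → A)),
    (∀ Y ∈ U, IsSubshift Y) ∧ U.Nonempty ∧
    (∀ Y ∈ U, ∃ ε > 0, ∀ Z, IsSubshift Z → Dmet S Z Y < ε → Z ∈ U) ∧
    IsMorphism φ ∧ ∀ Y ∈ U, φ '' Y = X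

section Aux
variable {G A : Type} [Group G]

lemma ball_mono (S : Finset G) {m n : ℕ} (h : m ≤ n) : ball S m ⊆ ball S n := by
  rintro g ⟨w, hw, hl, hp⟩
  exact ⟨w, hw, hl.trans h, hp⟩

lemma mem_ball_of_gen (S : Finset G) (hsym : ∀ s ∈ S, s⁻¹ ∈ S)
    (hgen : Subgroup.closure (S : Set G) = ⊤) (g : G) : ∃ n, g ∈ ball S n := by
  have hg : g ∈ Subgroup.closure (S : Set G) := by rw [hgen]; trivial
  induction hg using Subgroup.closure_induction with
  | mem s hs => exact ⟨1, [s], by simpa using hs, by simp, by simp⟩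
  | one => exact ⟨0, [], by simp, by simp, by simp⟩
  | mul x y hx hy ihx ihy =>
      obtain ⟨n, w, hw, hl, hp⟩ := ihx
      obtain ⟨m, v, hv, hlv, hpv⟩ := ihy
      refine ⟨n + m, w ++ v, ?_, ?_, ?_⟩
      · intro s hs; rcases List.mem_append.mp hs with h | h
        · exact hw s h
        · exact hv s h
      · simpa using Nat.add_le_add hl hlv
      · simp [hp, hpv]
  | inv x hx ih =>
      obtain ⟨n, w, hw, hl, hp⟩ := ih
      refine ⟨n, (w.map fun s => s⁻¹).reverse, ?_, ?_, ?_⟩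
      · intro s hs
        simp only [List.mem_reverse, List.mem_map] at hs
        obtain ⟨t, ht, rfl⟩ := hs
        exact hsym t (hw t ht)
      · simpa using hl
      · rw [← List.prod_inv_reverse, hp]

lemma finite_subset_ball (S : Finset G) (hsym : ∀ s ∈ S, s⁻¹ ∈ S)
    (hgen : Subgroup.closure (S : Set G) = ⊤) {T : Set G} (hT : T.Finite) :
    ∃ n, T ⊆ ball S n := by
  choose f hf using mem_ball_of_gen S hsym hgen
  refine ⟨hT.toFinset.sup f, fun x hx => ?_⟩
  exact ball_mono S (Finset.le_sup (hT.mem_toFinset.mpr hx)) (hf x)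

end Aux

/-- if `X` is an SFT then `S(X) = {Y : Y ⊆ X}` is open in `(S(A^G), D)`. -/
theorem statement3 {G A : Type} [Group G] [Fintype A]
    (S : Finset G) (hsym : ∀ s ∈ S, s⁻¹ ∈ S)
    (hgen : Subgroup.closure (S : Set G) = ⊤) :
    ∀ X : Set (G → A), IsSFT X → ∀ Y : Set (G → A), IsSubshift Y → Y ⊆ X →
      ∃ ε > (0:ℝ), ∀ Z : Set (G → A), IsSubshift Z → Dmet S Z Y < ε → Z ⊆ X := by
  rintro X ⟨hXsub, F, hFfin, hXeq⟩ Y hY hYX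
  -- find n with all pattern supports in ball S n
  have hTfin : (⋃ p ∈ F, ((p.1 : Finset G) : Set G)).Finite :=
    hFfin.biUnion (fun p _ => (p.1 : Finset G).finite_toSet)
  obtain ⟨n, hn⟩ := finite_subset_ball S hsym hgen hTfin
  refine ⟨(2:ℝ)⁻¹ ^ n, by positivity, ?_⟩
  intro Z hZ hD z hz
  have hne : (insert 2 {r | ∃ m : ℕ, Lang (ball S m) Z = Lang (ball S m) Y ∧
      r = (2:ℝ)⁻¹ ^ m}).Nonempty := ⟨2, Set.mem_insert _ _⟩
  have hbdd : BddBelow (insert 2 {r | ∃ m : ℕ, Lang (ball S m) Z = Lang (ball S m) Y ∧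
      r = (2:ℝ)⁻¹ ^ m}) := by
    refine ⟨0, ?_⟩
    rintro r (rfl | ⟨m, _, rfl⟩)
    · norm_num
    · positivity
  obtain ⟨r, hr, hrlt⟩ := (csInf_lt_iff hbdd hne).mp hD
  rcases hr with rfl | ⟨m, hLang, rfl⟩
  · exfalso
    have h1 : (2:ℝ)⁻¹ ^ n ≤ 1 := by
      apply pow_le_one₀ <;> norm_num
    linarith
  -- 2⁻¹ ^ m < 2⁻¹ ^ n gives n < m
  have hnm : n ≤ m := by
    by_contra h
    push_neg at h
    have : (2:ℝ)⁻¹ ^ n ≤ (2:ℝ)⁻¹ ^ m := by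
      exact pow_le_pow_of_le_one (by norm_num) (by norm_num) h.le
    linarith
  rw [hXeq]
  intro p hp hap
  obtain ⟨g, hg⟩ := hap
  have hz' : shiftMap g z ∈ Z := hZ.2.2 g z hz
  have hmem : (fun h : (ball S m : Set G) => shiftMap g z ↑h) ∈ Lang (ball S m) Z :=
    ⟨shiftMap g z, hz', rfl⟩
  rw [hLang] at hmem
  obtain ⟨y, hy, hyeq⟩ := hmem
  have hyX : y ∈ X := hYX hy
  rw [hXeq] at hyX
  refine hyX p hp ⟨1, ?_⟩
  intro h
  have hhb : (↑h : G) ∈ ball S m := by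
    apply ball_mono S hnm
    apply hn
    exact Set.mem_biUnion hp h.2
  have : y ↑h = shiftMap g z ↑h := congrFun hyeq ⟨↑h, hhb⟩
  simp only [shiftMap, inv_one, one_mul]
  rw [this]
  exact hg h
end

section
/- Every projectively isolated subshift is sofic, i.e., is a factor of a subshift of finite type. -/
open scoped Topology

/-!
A subshift `Y` is the decreasing limit of the SFTs obtained by forbidding the patterns on
`B_n` that do not occur in `Y`; the `n`-th of them has the same `B_n`-language as `Y`, so it lies
within `D`-distance `2⁻ⁿ` of `Y`. Hence every open set of subshifts contains an SFT `Z`, and if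
`φ(Y) = X` throughout that set, then `X = φ(Z)` is sofic.
-/

section Shift

variable {G B : Type} [Group G]

lemma shiftMap_one (x : G → B) : shiftMap (1 : G) x = x := by
  funext h; simp [shiftMap]

lemma shiftMap_shiftMap (g g' : G) (x : G → B) :
    shiftMap g (shiftMap g' x) = shiftMap (g * g') x := by
  funext h; simp [shiftMap, mul_assoc]

lemma ball_finite (S : Finset G) (n : ℕ) : (ball S n).Finite := by
  refine ((List.finite_length_le S n).image fun w => (w.map (↑)).prod).subset ?_
  rintro g ⟨w, hS, hlen, rfl⟩
  lift w to List S using hS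
  exact ⟨w, by simpa using hlen, rfl⟩

lemma isOpen_setOf_appears (p : Pattern G B) : IsOpen[cfgTop G B] {x | Appears p x} := by
  let _ : TopologicalSpace B := ⊥
  have _ : DiscreteTopology B := ⟨rfl⟩
  let _ : TopologicalSpace (G → B) := cfgTop G B
  have hset : {x : G → B | Appears p x} =
      ⋃ g : G, ⋂ h : (p.1 : Set G), (fun x : G → B => x (g⁻¹ * ↑h)) ⁻¹' {p.2 h} := by
    ext x
    simp only [Set.mem_ofPred_eq, Set.mem_iUnion, Set.mem_iInter, Set.mem_preimage,
      Set.mem_singleton_iff, Appears, shiftMap]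
  rw [hset]
  exact isOpen_iUnion fun g => isOpen_iInter_of_finite fun h =>
    (continuous_apply _).isOpen_preimage _ (isOpen_discrete _)

lemma Appears.of_shiftMap {p : Pattern G B} {g : G} {x : G → B}
    (h : Appears p (shiftMap g x)) : Appears p x := by
  obtain ⟨g', hg'⟩ := h
  exact ⟨g' * g, fun h => by rw [← shiftMap_shiftMap]; exact hg' h⟩

end Shift

section Approximation

variable {G B : Type} [Group G]

def absentPatterns (F : Finset G) (Y : Set (G → B)) : Set (Pattern G B) :=
  (fun f => ⟨F, f⟩) '' (Lang (F : Set G) Y)ᶜ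

def sftApprox (F : Finset G) (Y : Set (G → B)) : Set (G → B) :=
  {x | ∀ p ∈ absentPatterns F Y, ¬ Appears p x}

lemma subset_sftApprox {F : Finset G} {Y : Set (G → B)} (hY : ShiftInvariant Y) :
    Y ⊆ sftApprox F Y := by
  rintro x hx _ ⟨f, hf, rfl⟩ ⟨g, hg⟩
  exact hf ⟨shiftMap g x, hY g x hx, funext hg⟩

lemma isSubshift_sftApprox {F : Finset G} {Y : Set (G → B)} (hY : IsSubshift Y) :
    IsSubshift (sftApprox F Y) := by
  refine ⟨hY.1.mono (subset_sftApprox hY.2.2), ?_, ?_⟩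
  · let _ : TopologicalSpace (G → B) := cfgTop G B
    have hset : sftApprox F Y = ⋂ p ∈ absentPatterns F Y, {x | Appears p x}ᶜ := by
      ext x
      simp only [sftApprox, Set.mem_ofPred_eq, Set.mem_iInter, Set.mem_compl_iff]
    rw [hset]
    exact isClosed_biInter fun p _ => (isOpen_setOf_appears p).isClosed_compl
  · exact fun g x hx p hp hap => hx p hp hap.of_shiftMap

lemma isSFT_sftApprox [Finite B] {F : Finset G} {Y : Set (G → B)} (hY : IsSubshift Y) :
    IsSFT (sftApprox F Y) :=
  ⟨isSubshift_sftApprox hY, absentPatterns F Y, (Set.toFinite _).image _, rfl⟩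

lemma lang_sftApprox {F : Finset G} {Y : Set (G → B)} (hY : ShiftInvariant Y) :
    Lang (F : Set G) (sftApprox F Y) = Lang (F : Set G) Y := by
  refine (Set.image_mono (subset_sftApprox hY)).antisymm' ?_
  rintro _ ⟨x, hx, rfl⟩
  by_contra hf
  exact hx ⟨F, fun h => x h⟩ ⟨_, hf, rfl⟩ ⟨1, fun h => by rw [shiftMap_one]⟩

lemma Dmet_le_of_lang_eq {S : Finset G} {n : ℕ} {Y Z : Set (G → B)}
    (h : Lang (ball S n) Z = Lang (ball S n) Y) : Dmet S Z Y ≤ (2 : ℝ)⁻¹ ^ n := by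
  refine csInf_le ⟨0, ?_⟩ (Set.mem_insert_of_mem _ ⟨n, h, rfl⟩)
  rintro r (rfl | ⟨m, -, rfl⟩) <;> positivity

theorem exists_isSFT_Dmet_lt [Finite B] (S : Finset G) {Y : Set (G → B)} (hY : IsSubshift Y)
    {ε : ℝ} (hε : 0 < ε) : ∃ Z, IsSFT Z ∧ Dmet S Z Y < ε := by
  obtain ⟨n, hn⟩ := exists_pow_lt_of_lt_one hε (by norm_num : (2 : ℝ)⁻¹ < 1)
  set F := (ball_finite S n).toFinset
  have hF : (F : Set G) = ball S n := (ball_finite S n).coe_toFinset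
  refine ⟨sftApprox F Y, isSFT_sftApprox hY, (Dmet_le_of_lang_eq ?_).trans_lt hn⟩
  rw [← hF]
  exact lang_sftApprox hY.2.2

end Approximation

theorem statement4_general {G A : Type} [Group G]
    (S : Finset G) :
    ∀ X : Set (G → A), ProjIsolated S X → IsSofic X := by
  intro X ⟨_, B, _, U, φ, hUsub, ⟨Y, hY⟩, hUopen, hφ, hφU⟩
  obtain ⟨ε, hε, hball⟩ := hUopen Y hY
  obtain ⟨Z, hZ, hZY⟩ := exists_isSFT_Dmet_lt S (hUsub Y hY) hε
  exact ⟨B, ‹_›, Z, φ, hZ, hφ, hφU Z (hball Z hZ.1 hZY)⟩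

/-- every projectively isolated subshift is sofic. -/
theorem statement4 {G A : Type} [Group G] [Fintype A]
    (S : Finset G) (hsym : ∀ s ∈ S, s⁻¹ ∈ S)
    (hgen : Subgroup.closure (S : Set G) = ⊤) :
    ∀ X : Set (G → A), ProjIsolated S X → IsSofic X :=
  statement4_general S
end
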